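/- For a tree T of order at least two, the following assertions are equivalent: (i) T is an α⁺-stable path; (ii) T is isomorphic to the chordless path P_{2n} on 2n vertices for some n ≥ 1; (iii) the distance between any two pendant vertices of T is odd. -/

import Mathlib

open Finset

variable {V : Type*}

/-- A stable (independent) set of vertices of `G`. -/
def IsStableSet (G : SimpleGraph V) (S : Finset V) : Prop :=
  ∀ u ∈ S, ∀ v ∈ S, ¬ G.Adj u v

/-- The stability number `α(G)`: the maximum cardinality of a stable set. -/
noncomputable def stabNum (G : SimpleGraph V) [Fintype V] : ℕ :=
  sSup {n : ℕ | ∃ S : Finset V, IsStableSet G S ∧ S.card = n}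

/-- A stability system of `G`: a stable set of maximum cardinality. -/
def IsStabSystem (G : SimpleGraph V) [Fintype V] (S : Finset V) : Prop :=
  IsStableSet G S ∧ S.card = stabNum G

/-- `G` is α⁻-stable: deleting any edge leaves the stability number unchanged. -/
def AlphaMinusStable (G : SimpleGraph V) [Fintype V] : Prop :=
  ∀ u v : V, G.Adj u v → stabNum (G.deleteEdges {s(u, v)}) = stabNum G

/-- `G` is α⁺-stable: adding any edge of the complement leaves the stability
number unchanged. -/
def AlphaPlusStable (G : SimpleGraph V) [Fintype V] : Prop :=
  ∀ u v : V, u ≠ v → ¬ G.Adj u v →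
    stabNum (G ⊔ SimpleGraph.fromEdgeSet {s(u, v)}) = stabNum G

/-- A matching of `G`, viewed as a set of pairwise non-incident edges. -/
def IsMatchingSet (G : SimpleGraph V) (M : Finset (Sym2 V)) : Prop :=
  (↑M : Set (Sym2 V)) ⊆ G.edgeSet ∧
    ∀ e ∈ M, ∀ f ∈ M, e ≠ f → ∀ v : V, ¬ (v ∈ e ∧ v ∈ f)

/-- The matching number `μ(G)`. -/
noncomputable def matchNum (G : SimpleGraph V) [Fintype V] : ℕ :=
  sSup {n : ℕ | ∃ M : Finset (Sym2 V), IsMatchingSet G M ∧ M.card = n}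

/-- A maximum matching of `G`. -/
def IsMaximumMatching (G : SimpleGraph V) [Fintype V] (M : Finset (Sym2 V)) : Prop :=
  IsMatchingSet G M ∧ M.card = matchNum G

/-- A perfect matching of `G`: a matching covering every vertex. -/
def IsPerfectMatchingSet (G : SimpleGraph V) (M : Finset (Sym2 V)) : Prop :=
  IsMatchingSet G M ∧ ∀ v : V, ∃ e ∈ M, v ∈ e

/-- A pendant vertex: a vertex of degree one. -/
def IsPendant (G : SimpleGraph V) (v : V) : Prop :=
  (G.neighborSet v).ncard = 1

/-- A set `D` is 2-dominating: every vertex outside `D` has at least two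
neighbors in `D`. -/
def Is2Dominating (G : SimpleGraph V) (D : Finset V) : Prop :=
  ∀ v : V, v ∉ D → 2 ≤ ({u : V | u ∈ D ∧ G.Adj v u}).ncard

/-- A chordal graph: no induced cycle on four or more vertices. -/
def IsChordal (G : SimpleGraph V) : Prop :=
  ∀ n : ℕ, 4 ≤ n → IsEmpty (SimpleGraph.cycleGraph n ↪g G)

/-- A bipartite graph: the vertex set is partitioned into two stable sets. -/
def IsBipartiteGr (G : SimpleGraph V) [Fintype V] [DecidableEq V] : Prop :=
  ∃ C : Finset V, IsStableSet G C ∧ IsStableSet G Cᶜ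

/-- A strong unique independence graph: a graph with a unique stability system
whose complement is also stable. -/
def IsStrongUniqueIndep (G : SimpleGraph V) [Fintype V] [DecidableEq V] : Prop :=
  ∃ S : Finset V, IsStabSystem G S ∧ (∀ S' : Finset V, IsStabSystem G S' → S' = S) ∧
    IsStableSet G Sᶜ

/-- A bistable bipartite graph: its two color classes are its only two
stability systems. -/
def IsBistable (G : SimpleGraph V) [Fintype V] [DecidableEq V] : Prop :=
  ∃ A : Finset V, IsStableSet G A ∧ IsStableSet G Aᶜ ∧
    IsStabSystem G A ∧ IsStabSystem G Aᶜ ∧ A ≠ Aᶜ ∧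
    ∀ S : Finset V, IsStabSystem G S → S = A ∨ S = Aᶜ

/-- A vertex cover of `G`. -/
def IsVertexCover (G : SimpleGraph V) (C : Finset V) : Prop :=
  ∀ u v : V, G.Adj u v → u ∈ C ∨ v ∈ C

/-- A minimum vertex cover of `G`. -/
def IsMinVertexCover (G : SimpleGraph V) [Fintype V] (C : Finset V) : Prop :=
  IsVertexCover G C ∧ ∀ C' : Finset V, IsVertexCover G C' → C.card ≤ C'.card

/-!
A tree with at most two leaves has maximum degree two (count degrees), so numbering the vertices
by their distance from a leaf identifies it with the path `P_N`, `N` its order. The path `P_N`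
is α⁺-stable exactly when `N` is even: in `P_{2n}` both colour classes are stability systems and
one of them avoids any two given vertices, whereas the even vertices form the only stability
system of `P_{2m+1}`. A tree is bipartite and connected, so two vertices lie at odd distance
exactly when their colours differ; hence at most two leaves are pairwise at odd distance, and
the two ends of `P_N` are at odd distance exactly when `N` is even.
-/

open SimpleGraph

section StabilityNumber

variable {W : Type*}

lemma IsStableSet.mono {G H : SimpleGraph V} (h : G ≤ H) {S : Finset V}
    (hS : IsStableSet H S) : IsStableSet G S :=
  fun u hu v hv hadj => hS u hu v hv (h hadj)

lemma IsStableSet.image_iso [DecidableEq W] {G : SimpleGraph V} {H : SimpleGraph W}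
    (e : G ≃g H) {S : Finset V} (hS : IsStableSet G S) : IsStableSet H (S.image e) := by
  simp only [IsStableSet, Finset.forall_mem_image, e.map_adj_iff]
  exact hS

lemma isStableSet_sup_edge_iff {G : SimpleGraph V} {S : Finset V} {u v : V} (huv : u ≠ v) :
    IsStableSet (G ⊔ fromEdgeSet {s(u, v)}) S ↔ IsStableSet G S ∧ ¬ (u ∈ S ∧ v ∈ S) := by
  constructor
  · intro hS
    refine ⟨hS.mono le_sup_left, fun ⟨hu, hv⟩ => hS u hu v hv (Or.inr ?_)⟩
    simpa using huv
  · rintro ⟨hS, huvS⟩ a ha b hb (hab | ⟨hab, -⟩)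
    · exact hS a ha b hb hab
    · rcases Sym2.eq_iff.1 (Set.mem_singleton_iff.1 hab) with ⟨rfl, rfl⟩ | ⟨rfl, rfl⟩
      · exact huvS ⟨ha, hb⟩
      · exact huvS ⟨hb, ha⟩

variable [Fintype V] [Fintype W]

lemma stabNum_bddAbove (G : SimpleGraph V) :
    BddAbove {n : ℕ | ∃ S : Finset V, IsStableSet G S ∧ #S = n} :=
  ⟨Fintype.card V, by rintro n ⟨S, -, rfl⟩; exact S.card_le_univ⟩

lemma le_stabNum (G : SimpleGraph V) {S : Finset V} (hS : IsStableSet G S) :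
    #S ≤ stabNum G :=
  le_csSup (stabNum_bddAbove G) ⟨S, hS, rfl⟩

lemma exists_isStabSystem (G : SimpleGraph V) : ∃ S : Finset V, IsStabSystem G S := by
  have hne : {n : ℕ | ∃ S : Finset V, IsStableSet G S ∧ #S = n}.Nonempty :=
    ⟨0, ∅, by simp [IsStableSet]⟩
  obtain ⟨S, hS, hcard⟩ := Nat.sSup_mem hne (stabNum_bddAbove G)
  exact ⟨S, hS, hcard⟩

lemma stabNum_le (G : SimpleGraph V) {k : ℕ}
    (h : ∀ S : Finset V, IsStableSet G S → #S ≤ k) : stabNum G ≤ k := by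
  obtain ⟨S, hS, hcard⟩ := exists_isStabSystem G
  exact hcard ▸ h S hS

/-- Adding the edge `uv` can only lose the stability systems containing both `u` and `v`. -/
lemma alphaPlusStable_iff {G : SimpleGraph V} :
    AlphaPlusStable G ↔ ∀ u v : V, u ≠ v → ¬ G.Adj u v →
      ∃ S : Finset V, IsStabSystem G S ∧ ¬ (u ∈ S ∧ v ∈ S) := by
  refine forall₂_congr fun u v => imp_congr_right fun huv => imp_congr_right fun _ => ?_
  have hle : stabNum (G ⊔ fromEdgeSet {s(u, v)}) ≤ stabNum G :=
    stabNum_le _ fun S hS => le_stabNum G (hS.mono le_sup_left)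
  constructor
  · intro heq
    obtain ⟨S, hS, hcard⟩ := exists_isStabSystem (G ⊔ fromEdgeSet {s(u, v)})
    rw [isStableSet_sup_edge_iff huv] at hS
    exact ⟨S, ⟨hS.1, hcard.trans heq⟩, hS.2⟩
  · rintro ⟨S, ⟨hS, hcard⟩, huvS⟩
    refine hle.antisymm (hcard ▸ le_stabNum _ ?_)
    exact (isStableSet_sup_edge_iff huv).2 ⟨hS, huvS⟩

lemma SimpleGraph.Iso.stabNum_le {G : SimpleGraph V} {H : SimpleGraph W} (e : G ≃g H) :
    stabNum G ≤ stabNum H := by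
  classical
  obtain ⟨S, hS, hcard⟩ := exists_isStabSystem G
  rw [← hcard, ← Finset.card_image_of_injective S e.injective]
  exact le_stabNum H (hS.image_iso e)

lemma SimpleGraph.Iso.isStabSystem_image [DecidableEq W] {G : SimpleGraph V}
    {H : SimpleGraph W} (e : G ≃g H) {S : Finset V} (hS : IsStabSystem G S) :
    IsStabSystem H (S.image e) := by
  refine ⟨hS.1.image_iso e, ?_⟩
  rw [Finset.card_image_of_injective S e.injective, hS.2]
  exact e.stabNum_le.antisymm e.symm.stabNum_le

lemma SimpleGraph.Iso.alphaPlusStable {G : SimpleGraph V} {H : SimpleGraph W} (e : G ≃g H)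
    (hH : AlphaPlusStable H) : AlphaPlusStable G := by
  classical
  rw [alphaPlusStable_iff] at hH ⊢
  intro u v huv hadj
  obtain ⟨S, hS, huvS⟩ := hH (e u) (e v) (e.injective.ne huv) (e.map_adj_iff.not.2 hadj)
  refine ⟨S.image e.symm, e.symm.isStabSystem_image hS, ?_⟩
  have hmem (x : V) : x ∈ S.image e.symm ↔ e x ∈ S := by
    rw [← e.symm.injective.mem_finset_image, e.symm_apply_apply]
  rwa [hmem, hmem]

end StabilityNumber

section PathGraph

variable {N : ℕ}

lemma isStableSet_pathGraph_of_mod_two_eq {r : ℕ} {S : Finset (Fin N)}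
    (hS : ∀ v ∈ S, v.val % 2 = r) : IsStableSet (pathGraph N) S := by
  intro a ha b hb hab
  have := hS a ha
  have := hS b hb
  rw [pathGraph_adj] at hab
  omega

lemma exists_card_eq_forall_mod_two_eq {n r : ℕ} (hr : r < 2) (h : 2 * n + r ≤ N + 1) :
    ∃ S : Finset (Fin N), #S = n ∧ ∀ v ∈ S, v.val % 2 = r := by
  let f : Fin n → Fin N := fun i => ⟨2 * i + r, by omega⟩
  have hf : Function.Injective f := fun i j hij => by
    simp only [f, Fin.mk.injEq] at hij
    omega
  refine ⟨Finset.univ.image f, by simp [Finset.card_image_of_injective _ hf], ?_⟩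
  simp only [Finset.mem_image, Finset.mem_univ, true_and, forall_exists_index,
    forall_apply_eq_imp_iff, f]
  omega

/-- Halving the labels is injective on a stable set, since `2k` and `2k+1` are adjacent. -/
lemma IsStableSet.card_filter_le_pathGraph {S : Finset (Fin N)}
    (hS : IsStableSet (pathGraph N) S) (a : ℕ) :
    #(S.filter (a ≤ ·.val)) ≤ (N - a + 1) / 2 := by
  refine (Finset.card_le_card_of_injOn (fun v : Fin N => (v.val - a) / 2)
    (t := Finset.range ((N - a + 1) / 2)) (fun v hv => ?_) ?_).trans (by simp)
  · simp only [Finset.coe_filter, Set.mem_ofPred_eq, Finset.coe_range, Set.mem_Iio] at hv ⊢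
    omega
  intro v hv w hw hvw
  simp only [Finset.coe_filter, Set.mem_ofPred_eq] at hv hw hvw
  by_contra hne
  exact hS v hv.1 w hw.1 (pathGraph_adj.2 (by rw [Fin.ext_iff] at hne; omega))

lemma stabNum_pathGraph : stabNum (pathGraph N) = (N + 1) / 2 := by
  refine le_antisymm (stabNum_le _ fun S hS => ?_) ?_
  · simpa using hS.card_filter_le_pathGraph 0
  · obtain ⟨S, hcard, hS⟩ := exists_card_eq_forall_mod_two_eq (N := N) (n := (N + 1) / 2)
      (r := 0) (by omega) (by omega)
    exact hcard ▸ le_stabNum _ (isStableSet_pathGraph_of_mod_two_eq hS)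

lemma alphaPlusStable_pathGraph_two_mul (n : ℕ) : AlphaPlusStable (pathGraph (2 * n)) := by
  rw [alphaPlusStable_iff]
  intro u v _ _
  obtain ⟨r, hr, huv⟩ : ∃ r < 2, ¬ (u.val % 2 = r ∧ v.val % 2 = r) := by
    by_cases hu : u.val % 2 = 0
    · exact ⟨1, by omega, by omega⟩
    · exact ⟨0, by omega, by omega⟩
  obtain ⟨S, hcard, hS⟩ := exists_card_eq_forall_mod_two_eq (N := 2 * n) (n := n) hr (by omega)
  refine ⟨S, ⟨isStableSet_pathGraph_of_mod_two_eq hS, ?_⟩, fun h => huv ⟨hS u h.1, hS v h.2⟩⟩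
  rw [hcard, stabNum_pathGraph]
  omega

/-- A stable set of `P_{2m+1}` not containing both `0` and `2` has at most one vertex among
`0, 1, 2` and at most `m - 1` beyond them. -/
lemma not_alphaPlusStable_pathGraph_two_mul_add_one {m : ℕ} (hm : 1 ≤ m) :
    ¬ AlphaPlusStable (pathGraph (2 * m + 1)) := by
  rw [alphaPlusStable_iff]
  intro h
  obtain ⟨S, ⟨hS, hcard⟩, h02⟩ := h ⟨0, by omega⟩ ⟨2, by omega⟩ (by simp)
    (by simp [pathGraph_adj])
  have hlow : #(S.filter (¬ 3 ≤ ·.val)) ≤ 1 := by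
    refine Finset.card_le_one.2 fun a ha b hb => ?_
    simp only [Finset.mem_filter] at ha hb
    by_contra hne
    rw [Fin.ext_iff] at hne
    by_cases hadj : (pathGraph (2 * m + 1)).Adj a b
    · exact hS a ha.1 b hb.1 hadj
    · rw [pathGraph_adj] at hadj
      rcases (by omega : a.val = 0 ∧ b.val = 2 ∨ a.val = 2 ∧ b.val = 0) with
        ⟨ha0, hb2⟩ | ⟨ha2, hb0⟩
      · have ha' : a = ⟨0, by omega⟩ := Fin.ext ha0
        have hb' : b = ⟨2, by omega⟩ := Fin.ext hb2
        exact h02 ⟨ha' ▸ ha.1, hb' ▸ hb.1⟩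
      · have ha' : a = ⟨2, by omega⟩ := Fin.ext ha2
        have hb' : b = ⟨0, by omega⟩ := Fin.ext hb0
        exact h02 ⟨hb' ▸ hb.1, ha' ▸ ha.1⟩
  have hhigh := hS.card_filter_le_pathGraph 3
  have hsplit := Finset.card_filter_add_card_filter_not (s := S) (p := (3 ≤ ·.val))
  rw [stabNum_pathGraph] at hcard
  omega

lemma isPendant_pathGraph_iff (hN : 2 ≤ N) (v : Fin N) :
    IsPendant (pathGraph N) v ↔ v.val = 0 ∨ v.val = N - 1 := by
  have hv := v.isLt
  rw [IsPendant, Set.ncard_eq_one]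
  constructor
  · rintro ⟨a, ha⟩
    by_contra! hmid
    have hlo : (⟨v - 1, by omega⟩ : Fin N) ∈ (pathGraph N).neighborSet v := by
      simp [pathGraph_adj]
      omega
    have hhi : (⟨v + 1, by omega⟩ : Fin N) ∈ (pathGraph N).neighborSet v := by
      simp [pathGraph_adj]
    rw [ha, Set.mem_singleton_iff] at hlo hhi
    have := Fin.mk.inj_iff.1 (hlo.trans hhi.symm)
    omega
  · rintro (h | h)
    · refine ⟨⟨1, by omega⟩, Set.ext fun w => ?_⟩
      simp [pathGraph_adj, Fin.ext_iff]
      omega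
    · refine ⟨⟨N - 2, by omega⟩, Set.ext fun w => ?_⟩
      simp [pathGraph_adj, Fin.ext_iff]
      omega

end PathGraph

section Connected

variable {W : Type*} {G : SimpleGraph V}

lemma isPendant_iff_degree_eq_one {v : V} [Fintype (G.neighborSet v)] :
    IsPendant G v ↔ G.degree v = 1 := by
  rw [IsPendant, ← Nat.card_coe_set_eq, Nat.card_eq_fintype_card, card_neighborSet_eq_degree]

lemma SimpleGraph.Iso.isPendant_iff {H : SimpleGraph W} (e : G ≃g H) {v : V} :
    IsPendant H (e v) ↔ IsPendant G v := by
  rw [IsPendant, IsPendant, ← e.image_neighborSet, Set.ncard_image_of_injective _ e.injective]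

lemma SimpleGraph.Coloring.odd_dist_iff (hG : G.Connected) (c : G.Coloring Bool) (u v : V) :
    Odd (G.dist u v) ↔ c u ≠ c v := by
  obtain ⟨p, hp⟩ := hG.exists_walk_length_eq_dist u v
  rw [← hp, c.odd_length_iff_not_congr]
  cases c u <;> cases c v <;> simp

lemma SimpleGraph.Connected.ncard_le_two_of_pairwise_odd_dist (hG : G.Connected)
    (c : G.Coloring Bool) {s : Set V} (hs : s.Pairwise fun u v => Odd (G.dist u v)) :
    s.ncard ≤ 2 := by
  have hinj : Set.InjOn c s := fun u hu v hv huv => by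
    by_contra hne
    exact (c.odd_dist_iff hG u v).1 (hs hu hv hne) huv
  simpa using Set.ncard_le_ncard_of_injOn c (fun _ _ => Set.mem_univ _) hinj Set.finite_univ

/-- The end vertices `0` and `N - 1` of `P_N` have the same colour exactly when `N` is odd. -/
lemma SimpleGraph.Connected.odd_dist_iff_even_of_iso_pathGraph {N : ℕ} (hG : G.Connected)
    (hN : 2 ≤ N) (e : G ≃g pathGraph N) {u v : V} (hu : IsPendant G u) (hv : IsPendant G v)
    (huv : u ≠ v) : Odd (G.dist u v) ↔ Even N := by
  let c : G.Coloring Bool := (pathGraph.bicoloring N).comp e.toHom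
  rw [c.odd_dist_iff hG]
  rw [← e.isPendant_iff, isPendant_pathGraph_iff hN] at hu hv
  have hne : (e u).val ≠ (e v).val := fun h => huv (e.injective (Fin.ext h))
  change decide ((e u).val % 2 = 0) ≠ decide ((e v).val % 2 = 0) ↔ _
  rw [Nat.even_iff]
  rcases hu with hu | hu <;> rcases hv with hv | hv <;> simp <;> omega

lemma SimpleGraph.Connected.even_of_iso_pathGraph {N : ℕ} (hG : G.Connected) (hN : 2 ≤ N)
    (e : G ≃g pathGraph N)
    (hodd : ∀ u v : V, IsPendant G u → IsPendant G v → u ≠ v → Odd (G.dist u v)) : Even N := by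
  have hend (i : Fin N) (hi : i.val = 0 ∨ i.val = N - 1) : IsPendant G (e.symm i) := by
    rwa [← e.isPendant_iff, e.apply_symm_apply, isPendant_pathGraph_iff hN]
  have hfirst := hend ⟨0, by omega⟩ (Or.inl rfl)
  have hlast := hend ⟨N - 1, by omega⟩ (Or.inr rfl)
  have hne : e.symm ⟨0, by omega⟩ ≠ e.symm ⟨N - 1, by omega⟩ :=
    e.symm.injective.ne (by simp [Fin.ext_iff]; omega)
  exact (hG.odd_dist_iff_even_of_iso_pathGraph hN e hfirst hlast hne).1
    (hodd _ _ hfirst hlast hne)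

lemma SimpleGraph.Connected.exists_adj_dist_add_one_eq (hG : G.Connected) {r v : V}
    (hv : v ≠ r) : ∃ w, G.Adj w v ∧ G.dist r w + 1 = G.dist r v := by
  obtain ⟨p, hp⟩ := hG.exists_walk_length_eq_dist v r
  cases p with
  | nil => exact absurd rfl hv
  | @cons _ w _ hadj q =>
    refine ⟨w, hadj.symm, le_antisymm ?_ ?_⟩
    · rw [dist_comm (u := r), dist_comm (u := r), ← hp, Walk.length_cons]
      exact Nat.add_le_add_right (dist_le q) 1
    · simpa [dist_eq_one_iff_adj.2 hadj.symm] using hG.dist_triangle (u := r) (v := w) (w := v)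

end Connected

section Tree

variable [Fintype V] {T : SimpleGraph V} [DecidableRel T.Adj]

lemma SimpleGraph.IsTree.two_le_ncard_isPendant (hT : T.IsTree) [Nontrivial V] :
    2 ≤ {v : V | IsPendant T v}.ncard := by
  obtain ⟨u, v, huv, hu, hv⟩ := hT.exists_ne_and_degree_eq_one
  rw [← Set.ncard_pair huv]
  refine Set.ncard_le_ncard ?_ (Set.toFinite _)
  rintro w (rfl | rfl) <;> simpa [isPendant_iff_degree_eq_one]

/-- The `≤ 2` leaves contribute `1` to the degree sum `2 (|V| - 1)`, every other vertex at
least `2`, so there is no room for a vertex of degree `3`. -/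
lemma SimpleGraph.IsTree.degree_le_two (hT : T.IsTree) [Nontrivial V]
    (hpend : {v : V | IsPendant T v}.ncard ≤ 2) (x : V) : T.degree x ≤ 2 := by
  by_contra! hx
  have hpos (v : V) : 1 ≤ T.degree v :=
    hT.connected.preconnected.minDegree_pos_of_nontrivial.trans_le (T.minDegree_le_degree v)
  have hleaves : #(Finset.univ.filter fun v => T.degree v = 1) ≤ 2 := by
    simpa [isPendant_iff_degree_eq_one, ← Set.ncard_coe_finset] using hpend
  have hlt : ∑ v, (if T.degree v = 1 then 1 else 2) < ∑ v, T.degree v := by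
    refine Finset.sum_lt_sum (fun v _ => ?_) ⟨x, Finset.mem_univ x, ?_⟩
    · have := hpos v
      split_ifs <;> omega
    · split_ifs <;> omega
  rw [Finset.sum_ite, sum_degrees_eq_twice_card_edges] at hlt
  have hedges := hT.card_edgeFinset
  have hsplit := Finset.card_filter_add_card_filter_not (s := Finset.univ)
    (p := fun v => T.degree v = 1)
  simp only [Finset.sum_const, smul_eq_mul, Finset.card_univ] at hlt hsplit
  omega

variable {r : V}

/-- Unless `y = r`, one of the at most two edges at `y` leads towards `r`. -/
lemma SimpleGraph.IsTree.eq_of_adj_of_dist_eq_add_one (hT : T.IsTree) (hr : T.degree r = 1)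
    (hdeg : ∀ v, T.degree v ≤ 2) {y v w : V} (hv : T.Adj y v) (hw : T.Adj y w)
    (hdv : T.dist r v = T.dist r y + 1) (hdw : T.dist r w = T.dist r y + 1) : v = w := by
  classical
  by_contra hne
  by_cases hy : y = r
  · subst hy
    have := Finset.card_le_card (s := {v, w}) (t := T.neighborFinset y) (by
      simp [Finset.insert_subset_iff, hv, hw])
    rw [Finset.card_pair hne, card_neighborFinset_eq_degree] at this
    omega
  · obtain ⟨z, hz, hdz⟩ := hT.connected.exists_adj_dist_add_one_eq hy
    have hzv : z ≠ v := by rintro rfl; omega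
    have hzw : z ≠ w := by rintro rfl; omega
    have := Finset.card_le_card (s := {z, v, w}) (t := T.neighborFinset y) (by
      simp [Finset.insert_subset_iff, hz.symm, hv, hw])
    rw [Finset.card_insert_of_notMem (by simp [hzv, hzw]), Finset.card_pair hne,
      card_neighborFinset_eq_degree] at this
    have := hdeg y
    omega

lemma SimpleGraph.IsTree.dist_injective (hT : T.IsTree) (hr : T.degree r = 1)
    (hdeg : ∀ v, T.degree v ≤ 2) : Function.Injective (T.dist r) := by
  suffices ∀ k v w, T.dist r v = k → T.dist r w = k → v = w from
    fun v w h => this _ v w rfl h.symm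
  intro k
  induction k with
  | zero =>
    intro v w hv hw
    exact (hT.connected.dist_eq_zero_iff.1 hv).symm.trans (hT.connected.dist_eq_zero_iff.1 hw)
  | succ k ih =>
    intro v w hv hw
    have hvr : v ≠ r := by rintro rfl; simp at hv
    have hwr : w ≠ r := by rintro rfl; simp at hw
    obtain ⟨v', hv', hdv⟩ := hT.connected.exists_adj_dist_add_one_eq hvr
    obtain ⟨w', hw', hdw⟩ := hT.connected.exists_adj_dist_add_one_eq hwr
    obtain rfl : v' = w' := ih v' w' (by omega) (by omega)
    exact hT.eq_of_adj_of_dist_eq_add_one hr hdeg hv' hw' hdv.symm (by omega)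

lemma SimpleGraph.IsTree.adj_iff_dist (hT : T.IsTree) (hr : T.degree r = 1)
    (hdeg : ∀ v, T.degree v ≤ 2) {v w : V} :
    T.Adj v w ↔ T.dist r v + 1 = T.dist r w ∨ T.dist r w + 1 = T.dist r v := by
  refine ⟨fun h => by have := hT.dist_eq_dist_add_one_of_adj r h; omega, ?_⟩
  have key {a b : V} (h : T.dist r a + 1 = T.dist r b) : T.Adj a b := by
    have hb : b ≠ r := by rintro rfl; simp at h
    obtain ⟨a', ha', hda⟩ := hT.connected.exists_adj_dist_add_one_eq hb
    rwa [← hT.dist_injective hr hdeg (Nat.add_right_cancel (hda.trans h.symm))]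
  rintro (h | h)
  · exact key h
  · exact (key h).symm

lemma SimpleGraph.IsTree.nonempty_iso_pathGraph (hT : T.IsTree) [Nontrivial V]
    (hdeg : ∀ v, T.degree v ≤ 2) : Nonempty (T ≃g pathGraph (Fintype.card V)) := by
  obtain ⟨r, hr⟩ := hT.exists_vert_degree_one_of_nontrivial
  let f : V → Fin (Fintype.card V) := fun v => ⟨T.dist r v, by
    obtain ⟨p, hp, hlen⟩ := hT.connected.exists_path_of_dist r v
    exact hlen ▸ hp.length_lt⟩
  have hf : Function.Injective f := fun v w h => hT.dist_injective hr hdeg (Fin.mk.inj_iff.1 h)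
  have hbij : Function.Bijective f := (Fintype.bijective_iff_injective_and_card f).2 ⟨hf, by simp⟩
  exact ⟨⟨Equiv.ofBijective f hbij, by simp [f, pathGraph_adj, hT.adj_iff_dist hr hdeg]⟩⟩

end Tree

/-- For a tree `T` of order at least two, the following are
equivalent: (i) `T` is an α⁺-stable path; (ii) `T` is isomorphic to the path
`P_{2n}` for some `n ≥ 1`; (iii) the distance between any two pendant vertices
of `T` is odd. -/
theorem stmt8 {V : Type*} [Fintype V] (T : SimpleGraph V)
    (hT : T.IsTree) (h2 : 2 ≤ Fintype.card V) :
    List.TFAE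
      [ AlphaPlusStable T ∧ {v : V | IsPendant T v}.ncard = 2,
        ∃ n : ℕ, 1 ≤ n ∧ Nonempty (T ≃g SimpleGraph.pathGraph (2 * n)),
        ∀ u v : V, IsPendant T u → IsPendant T v → u ≠ v → Odd (T.dist u v) ] := by
  classical
  have : Nontrivial V := Fintype.one_lt_card_iff_nontrivial.1 h2
  tfae_have 1 → 2 := by
    rintro ⟨hplus, hpend⟩
    obtain ⟨e⟩ := hT.nonempty_iso_pathGraph (hT.degree_le_two hpend.le)
    obtain ⟨n, hn | hn⟩ := Nat.even_or_odd' (Fintype.card V)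
    · exact ⟨n, by omega, ⟨hn ▸ e⟩⟩
    · have := e.symm.alphaPlusStable hplus
      rw [hn] at this
      exact absurd this (not_alphaPlusStable_pathGraph_two_mul_add_one (by omega))
  tfae_have 2 → 3 := by
    rintro ⟨n, hn, ⟨e⟩⟩ u v hu hv huv
    exact (hT.connected.odd_dist_iff_even_of_iso_pathGraph (by omega) e hu hv huv).2
      (even_two_mul n)
  tfae_have 3 → 1 := by
    intro hodd
    have hpend : {v : V | IsPendant T v}.ncard = 2 :=
      le_antisymm (hT.connected.ncard_le_two_of_pairwise_odd_dist
        (recolorOfEquiv T finTwoEquiv hT.coloringTwo) fun u hu v hv => hodd u v hu hv)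
        hT.two_le_ncard_isPendant
    obtain ⟨e⟩ := hT.nonempty_iso_pathGraph (hT.degree_le_two hpend.le)
    obtain ⟨n, hn⟩ := hT.connected.even_of_iso_pathGraph h2 e hodd
    refine ⟨e.alphaPlusStable ?_, hpend⟩
    rw [hn, ← two_mul]
    exact alphaPlusStable_pathGraph_two_mul n
  tfae_finish
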